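/- arXiv:1410.7249 — 4 statements merged into one kernel-verified Lean document; each statement's English description precedes it below -/
import Mathlib

section
/- Let 0 < α < 1, L1, L2 > 0, and p > 0. Among all constant allocations (r·p, (1-r)·p) with r ∈ (0,1) for two independent tasks of lengths L1 and L2, the makespan max(L1/(r p)^α, L2/((1-r) p)^α) is minimized uniquely at r = L1^(1/α)/(L1^(1/α)+L2^(1/α)), where it equals (L1^(1/α)+L2^(1/α))^α / p^α. -/
/-!
The time `L / q ^ α` a task needs on a share `q` strictly decreases in `q`, so the first
completion time strictly decreases and the second strictly increases in `r`. Hence the maximum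
of the two is minimal exactly where they agree, i.e. where `r ∝ L1 ^ (1 / α)` and
`1 - r ∝ L2 ^ (1 / α)`.
-/

open Set

noncomputable def completionTime (α L q : ℝ) : ℝ := L / q ^ α

theorem completionTime_strictAntiOn {α L : ℝ} (hα : 0 < α) (hL : 0 < L) :
    StrictAntiOn (completionTime α L) (Ioi 0) := fun _ hs _ _ hst =>
  div_lt_div_of_pos_left hL (Real.rpow_pos_of_pos hs _) (Real.rpow_lt_rpow (le_of_lt hs) hst hα)

theorem completionTime_proportional_share {α L S p : ℝ} (hα : α ≠ 0) (hL : 0 < L) (hS : 0 < S)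
    (hp : 0 ≤ p) : completionTime α L (L ^ (1 / α) / S * p) = S ^ α / p ^ α := by
  have hLα : (L ^ (1 / α)) ^ α = L := by
    rw [one_div, Real.rpow_inv_rpow hL.le hα]
  rw [completionTime, Real.mul_rpow (by positivity) hp, Real.div_rpow (by positivity) hS.le, hLα]
  by_cases hp0 : p ^ α = 0
  · simp [hp0]
  · field_simp

theorem lt_max_of_strictAntiOn_of_strictMonoOn {ι β : Type*} [LinearOrder ι] [LinearOrder β]
    {s : Set ι} {f g : ι → β} (hf : StrictAntiOn f s) (hg : StrictMonoOn g s) {x y : ι}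
    (hx : x ∈ s) (hy : y ∈ s) (hyx : y ≠ x) (hfg : f x = g x) : f x < max (f y) (g y) := by
  rcases hyx.lt_or_gt with hlt | hlt
  · exact lt_max_of_lt_left (hf hy hx hlt)
  · exact lt_max_of_lt_right (hfg ▸ hg hx hy hlt)

theorem stmt_1_general (α L1 L2 p : ℝ) (hα0 : 0 < α)
    (hL1 : 0 < L1) (hL2 : 0 < L2) (hp : 0 < p) :
    let rstar : ℝ := L1 ^ (1 / α) / (L1 ^ (1 / α) + L2 ^ (1 / α))
    let M : ℝ → ℝ := fun r => max (L1 / (r * p) ^ α) (L2 / ((1 - r) * p) ^ α)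
    (0 < rstar ∧ rstar < 1) ∧
    M rstar = (L1 ^ (1 / α) + L2 ^ (1 / α)) ^ α / p ^ α ∧
    (∀ r : ℝ, 0 < r → r < 1 → r ≠ rstar → M rstar < M r) := by
  intro rstar M
  set A := L1 ^ (1 / α)
  set B := L2 ^ (1 / α)
  have hA : 0 < A := Real.rpow_pos_of_pos hL1 _
  have hB : 0 < B := Real.rpow_pos_of_pos hL2 _
  have hS : 0 < A + B := add_pos hA hB
  have hrstar : rstar ∈ Ioo 0 1 := ⟨div_pos hA hS, (div_lt_one hS).2 (lt_add_of_pos_right A hB)⟩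
  have hfirst : completionTime α L1 (rstar * p) = (A + B) ^ α / p ^ α :=
    completionTime_proportional_share hα0.ne' hL1 hS hp.le
  have hsecond : completionTime α L2 ((1 - rstar) * p) = (A + B) ^ α / p ^ α := by
    rw [show 1 - A / (A + B) = B / (A + B) by field_simp; ring]
    exact completionTime_proportional_share hα0.ne' hL2 hS hp.le
  have hanti : StrictAntiOn (fun r => completionTime α L1 (r * p)) (Ioo 0 1) :=
    fun r hr s hs hrs => completionTime_strictAntiOn hα0 hL1 (mul_pos hr.1 hp)
      (mul_pos hs.1 hp) (mul_lt_mul_of_pos_right hrs hp)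
  have hmono : StrictMonoOn (fun r => completionTime α L2 ((1 - r) * p)) (Ioo 0 1) :=
    fun r hr s hs hrs => completionTime_strictAntiOn hα0 hL2 (mul_pos (sub_pos.2 hs.2) hp)
      (mul_pos (sub_pos.2 hr.2) hp) (mul_lt_mul_of_pos_right (sub_lt_sub_left hrs 1) hp)
  have hM : M rstar = (A + B) ^ α / p ^ α := by
    change max (completionTime α L1 _) (completionTime α L2 _) = _
    rw [hfirst, hsecond, max_self]
  refine ⟨hrstar, hM, fun r hr0 hr1 hne => ?_⟩
  rw [hM, ← hfirst]
  exact lt_max_of_strictAntiOn_of_strictMonoOn hanti hmono hrstar ⟨hr0, hr1⟩ hne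
    (hfirst.trans hsecond.symm)

theorem stmt_1 (α L1 L2 p : ℝ) (hα0 : 0 < α) (hα1 : α < 1)
    (hL1 : 0 < L1) (hL2 : 0 < L2) (hp : 0 < p) :
    let rstar : ℝ := L1 ^ (1 / α) / (L1 ^ (1 / α) + L2 ^ (1 / α))
    let M : ℝ → ℝ := fun r => max (L1 / (r * p) ^ α) (L2 / ((1 - r) * p) ^ α)
    (0 < rstar ∧ rstar < 1) ∧
    M rstar = (L1 ^ (1 / α) + L2 ^ (1 / α)) ^ α / p ^ α ∧
    (∀ r : ℝ, 0 < r → r < 1 → r ≠ rstar → M rstar < M r) :=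
  stmt_1_general α L1 L2 p hα0 hL1 hL2 hp
end

section
/- Let 0 < α < 1, Δ1, Δ2 > 0, ε > 0, and 0 < u < v with ū = u + ε·Δ2 and v̄ = v − ε·Δ1 satisfying ū < v̄. Then Δ1·ū^α + Δ2·v̄^α > Δ1·u^α + Δ2·v^α. -/
/-!
Moving mass `ε * Δ2` from the larger allocation `v` to the smaller one `u` changes the total work
by `ε * Δ1 * Δ2` times the difference of two secant slopes of `x ↦ x ^ α`: that of
`[u, u + ε * Δ2]` minus that of `[v - ε * Δ1, v]`. Since the first interval lies to the left of
the second, strict concavity makes this difference positive.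
-/

variable {𝕜 : Type*} [Field 𝕜] [LinearOrder 𝕜] [IsStrictOrderedRing 𝕜] {s : Set 𝕜} {f : 𝕜 → 𝕜}

theorem StrictConcaveOn.slope_lt_slope_of_lt_of_le (hf : StrictConcaveOn 𝕜 s f) {x y z w : 𝕜}
    (hx : x ∈ s) (hw : w ∈ s) (hxy : x < y) (hyz : y ≤ z) (hzw : z < w) :
    (f w - f z) / (w - z) < (f y - f x) / (y - x) := by
  rcases hyz.lt_or_eq with hyz | rfl
  · have hy : y ∈ s := hf.1.ordConnected.out hx hw ⟨hxy.le, (hyz.trans hzw).le⟩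
    have hz : z ∈ s := hf.1.ordConnected.out hx hw ⟨(hxy.trans hyz).le, hzw.le⟩
    exact (hf.slope_anti_adjacent hy hw hyz hzw).trans (hf.slope_anti_adjacent hx hz hxy hyz)
  · exact hf.slope_anti_adjacent hx hw hxy hzw

theorem StrictConcaveOn.mul_add_mul_lt_of_transfer (hf : StrictConcaveOn 𝕜 s f) {a b ε u v : 𝕜}
    (hu : u ∈ s) (hv : v ∈ s) (ha : 0 < a) (hb : 0 < b) (hε : 0 < ε)
    (hle : u + ε * b ≤ v - ε * a) :
    a * f u + b * f v < a * f (u + ε * b) + b * f (v - ε * a) := by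
  have hεa : 0 < ε * a := mul_pos hε ha
  have hεb : 0 < ε * b := mul_pos hε hb
  have hslope := hf.slope_lt_slope_of_lt_of_le hu hv (lt_add_of_pos_right u hεb) hle
    (sub_lt_self v hεa)
  rw [sub_sub_cancel, add_sub_cancel_left, div_lt_div_iff₀ hεa hεb] at hslope
  have hscaled : ε * (a * f u + b * f v) < ε * (a * f (u + ε * b) + b * f (v - ε * a)) := by
    linear_combination hslope
  exact lt_of_mul_lt_mul_left hscaled hε.le

theorem stmt_6_general (α Δ1 Δ2 ε u v : ℝ) (hα0 : 0 < α) (hα1 : α < 1)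
    (hΔ1 : 0 < Δ1) (hΔ2 : 0 < Δ2) (hε : 0 < ε)
    (hu : 0 < u)
    (hlt : u + ε * Δ2 < v - ε * Δ1) :
    Δ1 * (u + ε * Δ2) ^ α + Δ2 * (v - ε * Δ1) ^ α >
      Δ1 * u ^ α + Δ2 * v ^ α := by
  have hv : 0 ≤ v := by linarith [mul_pos hε hΔ1, mul_pos hε hΔ2]
  exact (Real.strictConcaveOn_rpow hα0 hα1).mul_add_mul_lt_of_transfer (s := Set.Ici 0)
    hu.le hv hΔ1 hΔ2 hε hlt.le

theorem stmt_6 (α Δ1 Δ2 ε u v : ℝ) (hα0 : 0 < α) (hα1 : α < 1)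
    (hΔ1 : 0 < Δ1) (hΔ2 : 0 < Δ2) (hε : 0 < ε)
    (hu : 0 < u) (huv : u < v)
    (hlt : u + ε * Δ2 < v - ε * Δ1) :
    Δ1 * (u + ε * Δ2) ^ α + Δ2 * (v - ε * Δ1) ^ α >
      Δ1 * u ^ α + Δ2 * v ^ α :=
  stmt_6_general α Δ1 Δ2 ε u v hα0 hα1 hΔ1 hΔ2 hε hu hlt
end

section
/- Let n ≥ 3 and p > 0, and let p_1, …, p_n be positive reals with each p_i ≤ p and Σ p_i = 2p. Then there exists a partition of {1,…,n} into three sets S1, S2, S3 such that Σ_{i∈S_k} p_i ≤ p for each k ∈ {1,2,3}. -/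
/-! Order the items and cut at the first `j` whose prefix sum `∑_{i ≤ j} w i` exceeds `p`: the
items before `j` weigh at most `p` by minimality of `j`, item `j` weighs at most `p` by assumption,
and the items after `j` weigh less than `2p - p = p`. -/

open Finset

section

variable {ι : Type*} [Fintype ι] [LinearOrder ι]

def threeWaySplit (j i : ι) : Fin 3 :=
  if i < j then 0 else if i = j then 1 else 2

lemma filter_threeWaySplit_eq_zero (j : ι) :
    univ.filter (threeWaySplit j · = 0) = univ.filter (· < j) := by
  ext i
  simp only [mem_filter, mem_univ, true_and]
  unfold threeWaySplit; split_ifs <;> simp <;> order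

lemma filter_threeWaySplit_eq_one (j : ι) : univ.filter (threeWaySplit j · = 1) = {j} := by
  ext i
  simp only [mem_filter, mem_univ, true_and, mem_singleton]
  unfold threeWaySplit; split_ifs <;> simp <;> order

lemma filter_threeWaySplit_eq_two (j : ι) :
    univ.filter (threeWaySplit j · = 2) = univ.filter (j < ·) := by
  ext i
  simp only [mem_filter, mem_univ, true_and]
  unfold threeWaySplit; split_ifs <;> simp <;> order

lemma sum_filter_le_add_sum_filter_gt (w : ι → ℝ) (j : ι) :
    ∑ i ∈ univ.filter (· ≤ j), w i + ∑ i ∈ univ.filter (j < ·), w i = ∑ i, w i := by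
  simpa only [not_le] using sum_filter_add_sum_filter_not univ (· ≤ j) w

lemma sum_filter_lt_le_of_forall_lt_sum_filter_le {w : ι → ℝ} {p : ℝ} (hp : 0 ≤ p) {j : ι}
    (h : ∀ k < j, ∑ i ∈ univ.filter (· ≤ k), w i ≤ p) :
    ∑ i ∈ univ.filter (· < j), w i ≤ p := by
  obtain hA | hA := (univ.filter (· < j)).eq_empty_or_nonempty
  · simpa [hA] using hp
  · -- `{i | i < j}` is the closed prefix of its largest element.
    have hk := (mem_filter.mp (max'_mem _ hA)).2
    convert h _ hk using 2
    ext i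
    simp only [mem_filter, mem_univ, true_and]
    exact ⟨fun hi => le_max' _ i (by simpa using hi), fun hi => hi.trans_lt hk⟩

lemma exists_sum_filter_lt_le_lt_sum_filter_le {w : ι → ℝ} {p : ℝ} (hp : 0 ≤ p)
    (h : p < ∑ i, w i) :
    ∃ j, ∑ i ∈ univ.filter (· < j), w i ≤ p ∧ p < ∑ i ∈ univ.filter (· ≤ j), w i := by
  have hne : (univ.filter fun j => p < ∑ i ∈ univ.filter (· ≤ j), w i).Nonempty := by
    have hι : (univ : Finset ι).Nonempty := nonempty_of_sum_ne_zero (hp.trans_lt h).ne'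
    exact ⟨univ.max' hι, by simpa [le_max' univ] using h⟩
  refine ⟨_, sum_filter_lt_le_of_forall_lt_sum_filter_le hp fun k hk => ?_,
    (mem_filter.mp (min'_mem _ hne)).2⟩
  by_contra! hpk
  exact (min'_le _ k (by simpa using hpk)).not_gt hk

theorem exists_three_parts_sum_le {w : ι → ℝ} {p : ℝ} (hp : 0 ≤ p) (hw : ∀ i, w i ≤ p)
    (hsum : ∑ i, w i ≤ 2 * p) :
    ∃ f : ι → Fin 3, ∀ k, ∑ i ∈ univ.filter (f · = k), w i ≤ p := by
  by_cases htot : ∑ i, w i ≤ p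
  · refine ⟨fun _ => 0, fun k => ?_⟩
    fin_cases k <;> simpa
  obtain ⟨j, hlt, hle⟩ := exists_sum_filter_lt_le_lt_sum_filter_le hp (not_le.mp htot)
  refine ⟨threeWaySplit j, fun k => ?_⟩
  fin_cases k
  · simpa [filter_threeWaySplit_eq_zero] using hlt
  · simpa [filter_threeWaySplit_eq_one] using hw j
  · have := sum_filter_le_add_sum_filter_gt w j
    simp only [Fin.reduceFinMk, filter_threeWaySplit_eq_two]
    linarith

end

theorem stmt_10_general (n : ℕ) (p : ℝ) (hp : 0 < p)
    (w : Fin n → ℝ) (hwle : ∀ i, w i ≤ p)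
    (hsum : ∑ i, w i = 2 * p) :
    ∃ f : Fin n → Fin 3, ∀ k : Fin 3,
      ∑ i ∈ Finset.univ.filter (fun i => f i = k), w i ≤ p :=
  exists_three_parts_sum_le hp.le hwle hsum.le

theorem stmt_10 (n : ℕ) (hn : 3 ≤ n) (p : ℝ) (hp : 0 < p)
    (w : Fin n → ℝ) (hwpos : ∀ i, 0 < w i) (hwle : ∀ i, w i ≤ p)
    (hsum : ∑ i, w i = 2 * p) :
    ∃ f : Fin n → Fin 3, ∀ k : Fin 3,
      ∑ i ∈ Finset.univ.filter (fun i => f i = k), w i ≤ p :=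
  stmt_10_general n p hp w hwle hsum
end

section
/- Let 0 < α ≤ 1, p, q > 0, x_1,…,x_n > 0 with S = Σ x_i, and let A* be a subset with Σ* := Σ_{i∈A*} x_i ≤ p·S/(p+q) achieving makespan M_OPT = ((S − Σ*)/q)^α. Let 0 < κ < 1 and let A be a subset with κ·Σ* ≤ Σ_{i∈A} x_i ≤ Σ*. Then the makespan M_A of the schedule assigning A to the p-node satisfies M_A / M_OPT ≤ (1 + (p/q)(1−κ))^α. -/
/-! Since `∑_A ≤ Sstar ≤ p S / (p + q)`, the `p`-node finishes first under both schedules, so both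
makespans are `q`-node loads raised to the power `α`. The loss `Sstar - ∑_A ≤ (1 - κ) Sstar` is at
most `(p / q)(1 - κ)(S - Sstar)` because `q Sstar ≤ p (S - Sstar)`, which gives
`S - ∑_A ≤ (1 + (p / q)(1 - κ))(S - Sstar)`; monotonicity of `t ↦ t ^ α` finishes. -/

open Finset Real

section TwoNodeBounds

variable {p q S σ : ℝ}

lemma le_of_le_mul_div_add (hp : 0 < p) (hq : 0 < q) (hS : 0 ≤ S) (h : σ ≤ p * S / (p + q)) :
    σ ≤ S :=
  h.trans <| div_le_of_le_mul₀ (by positivity) hS (by nlinarith)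

lemma div_le_sub_div_of_le_mul_div_add (hp : 0 < p) (hq : 0 < q) (h : σ ≤ p * S / (p + q)) :
    σ / p ≤ (S - σ) / q := by
  rw [le_div_iff₀ (by positivity)] at h
  rw [div_le_div_iff₀ hp hq]
  linarith

lemma max_rpow_div_eq_of_le_mul_div_add {α : ℝ} (hα : 0 ≤ α) (hp : 0 < p) (hq : 0 < q)
    (hσ : 0 ≤ σ) (h : σ ≤ p * S / (p + q)) :
    max ((σ / p) ^ α) (((S - σ) / q) ^ α) = ((S - σ) / q) ^ α :=
  max_eq_right <| rpow_le_rpow (div_nonneg hσ hp.le) (div_le_sub_div_of_le_mul_div_add hp hq h) hα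

lemma sub_le_mul_sub_of_le_mul_div_add {κ Sstar : ℝ} (hp : 0 < p) (hq : 0 < q) (hκ : κ ≤ 1)
    (hSstar : Sstar ≤ p * S / (p + q)) (hσ : κ * Sstar ≤ σ) :
    S - σ ≤ (1 + p / q * (1 - κ)) * (S - Sstar) := by
  have hbalance : Sstar ≤ p / q * (S - Sstar) := by
    rw [le_div_iff₀ (by positivity)] at hSstar
    rw [div_mul_eq_mul_div, le_div_iff₀ hq]
    linarith
  have := mul_le_mul_of_nonneg_left hbalance (sub_nonneg.2 hκ)
  linarith

end TwoNodeBounds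

theorem stmt_14_general (α p q κ : ℝ) (n : ℕ) (x : Fin n → ℝ)
    (hα0 : 0 < α) (hp : 0 < p) (hq : 0 < q)
    (hκ1 : κ < 1) (hx : ∀ i, 0 < x i)
    (Astar A : Finset (Fin n)) :
    let S : ℝ := ∑ i, x i
    let Sstar : ℝ := ∑ i ∈ Astar, x i
    let MOPT : ℝ := ((S - Sstar) / q) ^ α
    let MA : ℝ := max (((∑ i ∈ A, x i) / p) ^ α) (((∑ i ∈ Aᶜ, x i) / q) ^ α)
    Sstar ≤ p * S / (p + q) →
    κ * Sstar ≤ ∑ i ∈ A, x i → ∑ i ∈ A, x i ≤ Sstar →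
    MA / MOPT ≤ (1 + (p / q) * (1 - κ)) ^ α := by
  intro S Sstar MOPT MA hSstar hκA hASstar
  have hS : 0 ≤ S := sum_nonneg fun i _ => (hx i).le
  have hA : 0 ≤ ∑ i ∈ A, x i := sum_nonneg fun i _ => (hx i).le
  have hgap : 0 ≤ (S - Sstar) / q :=
    div_nonneg (sub_nonneg.2 (le_of_le_mul_div_add hp hq hS hSstar)) hq.le
  have hfactor : 0 ≤ 1 + p / q * (1 - κ) := by
    have := sub_pos.2 hκ1
    positivity
  have hMA : MA = ((S - ∑ i ∈ A, x i) / q) ^ α := by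
    rw [← max_rpow_div_eq_of_le_mul_div_add hα0.le hp hq hA (hASstar.trans hSstar),
      ← eq_sub_of_add_eq' (sum_add_sum_compl A x)]
  refine div_le_of_le_mul₀ (rpow_nonneg hgap _) (rpow_nonneg hfactor _) ?_
  rw [hMA, ← mul_rpow hfactor hgap, ← mul_div_assoc]
  refine rpow_le_rpow (div_nonneg (sub_nonneg.2 ?_) hq.le) ?_ hα0.le
  · exact le_of_le_mul_div_add hp hq hS (hASstar.trans hSstar)
  · exact div_le_div_of_nonneg_right
      (sub_le_mul_sub_of_le_mul_div_add hp hq hκ1.le hSstar hκA) hq.le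

theorem stmt_14 (α p q κ : ℝ) (n : ℕ) (x : Fin n → ℝ)
    (hα0 : 0 < α) (hα1 : α ≤ 1) (hp : 0 < p) (hq : 0 < q)
    (hκ0 : 0 < κ) (hκ1 : κ < 1) (hx : ∀ i, 0 < x i)
    (Astar A : Finset (Fin n)) :
    let S : ℝ := ∑ i, x i
    let Sstar : ℝ := ∑ i ∈ Astar, x i
    let MOPT : ℝ := ((S - Sstar) / q) ^ α
    let MA : ℝ := max (((∑ i ∈ A, x i) / p) ^ α) (((∑ i ∈ Aᶜ, x i) / q) ^ α)
    Sstar ≤ p * S / (p + q) →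
    κ * Sstar ≤ ∑ i ∈ A, x i → ∑ i ∈ A, x i ≤ Sstar →
    MA / MOPT ≤ (1 + (p / q) * (1 - κ)) ^ α :=
  stmt_14_general α p q κ n x hα0 hp hq hκ1 hx Astar A
end
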